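/- If x is a positive element of a Garside group G (i.e., x lies in the Garside monoid M) with length-preserving relations, then ℓ_G(x) = ℓ_R(x) = ℓ(x); and if x⁻¹ ∈ M then ℓ_R(x) = ℓ(x). -/

import Mathlib

/-- Minimal length of `x` as a word in the alphabet `A ∪ A⁻¹`. -/
noncomputable def minLen {G : Type*} [Group G] (A : Set G) (x : G) : ℕ :=
  sInf {n | ∃ L : List G, (∀ g ∈ L, g ∈ A ∨ g⁻¹ ∈ A) ∧ L.prod = x ∧ L.length = n}

/-!
Length-preserving relations make `minLen A` additive on `M`; hence `M` has no nontrivial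
units and the length of a product of simple elements is the sum of their lengths.

For the rational normal form `x = u⁻¹v` with `u ∧ v = 1`: if `x ∈ M` then `u` left-divides
`v = ux`, so `u = 1`; dually `v = 1` when `x⁻¹ ∈ M`, and `ℓ(x) = ℓ(x⁻¹)`.

For the greedy normal form `x = δ^k p₁⋯p_r`, left-weightedness gives `δ ∧ p₁⋯p_r = p₁`. If
`k < 0`, then `δ` left-divides `p₁⋯p_r = δ^(-k) x`, forcing `p₁ = δ` (or `r = 0` and `δ = 1`).
So `k ≥ 0` unless `δ = 1`, and the lengths add up.
-/

section GarsideLengths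

variable {G : Type*} [Group G]

section MinLen

variable {A : Set G}

theorem minLen_one : minLen A (1 : G) = 0 :=
  Nat.sInf_eq_zero.2 (Or.inl ⟨[], by simp, by simp, rfl⟩)

theorem eq_one_of_minLen_eq_zero {x : G} (hx : x ∈ Subgroup.closure A) (h : minLen A x = 0) :
    x = 1 := by
  rw [← Subgroup.mem_toSubmonoid, Subgroup.closure_toSubmonoid] at hx
  obtain ⟨L, hL, rfl⟩ := Submonoid.exists_list_of_mem_closure hx
  rcases Nat.sInf_eq_zero.1 h with ⟨L', -, hprod, hlen⟩ | hempty
  · rw [← hprod, List.length_eq_zero_iff.1 hlen, List.prod_nil]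
  · refine absurd hempty (Set.nonempty_iff_ne_empty.1 ⟨L.length, L, fun g hg => ?_, rfl, rfl⟩)
    simpa using hL g hg

theorem minLen_inv (x : G) : minLen A x⁻¹ = minLen A x := by
  have inv_word : ∀ (y : G) (n : ℕ),
      (∃ L : List G, (∀ g ∈ L, g ∈ A ∨ g⁻¹ ∈ A) ∧ L.prod = y ∧ L.length = n) →
      ∃ L : List G, (∀ g ∈ L, g ∈ A ∨ g⁻¹ ∈ A) ∧ L.prod = y⁻¹ ∧ L.length = n := by
    rintro y n ⟨L, hL, rfl, rfl⟩
    refine ⟨(L.map (·⁻¹)).reverse, ?_, (List.prod_inv_reverse L).symm, by simp⟩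
    simp only [List.mem_reverse, List.mem_map]
    rintro _ ⟨g, hg, rfl⟩
    simpa [or_comm] using hL g hg
  unfold minLen
  congr 1
  ext n
  exact ⟨fun h => by simpa using inv_word x⁻¹ n h, inv_word x n⟩

end MinLen

section AdditiveLength

variable {A : Set G} {M : Submonoid G}

theorem minLen_list_prod
    (hadd : ∀ a ∈ M, ∀ b ∈ M, minLen A (a * b) = minLen A a + minLen A b)
    {L : List G} (hL : ∀ p ∈ L, p ∈ M) : minLen A L.prod = (L.map (minLen A)).sum := by
  induction L with
  | nil => simp [minLen_one]
  | cons p L ih =>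
    rw [List.forall_mem_cons] at hL
    rw [List.prod_cons, hadd p hL.1 _ (M.list_prod_mem hL.2), ih hL.2, List.map_cons,
      List.sum_cons]

theorem minLen_pow (hadd : ∀ a ∈ M, ∀ b ∈ M, minLen A (a * b) = minLen A a + minLen A b)
    {δ : G} (hδ : δ ∈ M) (n : ℕ) : minLen A (δ ^ n) = n * minLen A δ := by
  simpa using minLen_list_prod hadd (L := List.replicate n δ) (by simp [List.mem_replicate, hδ])

theorem minLen_zpow_mul_prod
    (hadd : ∀ a ∈ M, ∀ b ∈ M, minLen A (a * b) = minLen A a + minLen A b)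
    {δ : G} (hδ : δ ∈ M) {k : ℤ} {P : List G} (hP : ∀ p ∈ P, p ∈ M) (hk : 0 ≤ k ∨ δ = 1) :
    minLen A (δ ^ k * P.prod) = k.natAbs * minLen A δ + (P.map (minLen A)).sum := by
  rw [← minLen_list_prod hadd hP]
  rcases hk with hk | rfl
  · lift k to ℕ using hk
    rw [zpow_natCast, hadd _ (M.pow_mem hδ k) _ (M.list_prod_mem hP), minLen_pow hadd hδ,
      Int.natAbs_natCast]
  · rw [one_zpow, one_mul, minLen_one, mul_zero, zero_add]

theorem eq_one_of_mul_eq_one (hM : M ≤ Submonoid.closure A)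
    (hadd : ∀ a ∈ M, ∀ b ∈ M, minLen A (a * b) = minLen A a + minLen A b)
    {c d : G} (hc : c ∈ M) (hd : d ∈ M) (h : c * d = 1) : c = 1 := by
  have hlen := hadd c hc d hd
  rw [h, minLen_one] at hlen
  exact eq_one_of_minLen_eq_zero (Subgroup.le_closure_toSubmonoid A (hM hc)) (by omega)

end AdditiveLength

namespace Submonoid

def LeftDvd (M : Submonoid G) (a b : G) : Prop := ∃ c ∈ M, a * c = b

variable {M : Submonoid G} {a b c : G}

theorem leftDvd_refl (a : G) : M.LeftDvd a a := ⟨1, M.one_mem, mul_one a⟩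

theorem leftDvd_mul_right (a : G) (hc : c ∈ M) : M.LeftDvd a (a * c) := ⟨c, hc, rfl⟩

theorem LeftDvd.trans (hab : M.LeftDvd a b) (hbc : M.LeftDvd b c) : M.LeftDvd a c := by
  obtain ⟨d, hd, rfl⟩ := hab
  obtain ⟨e, he, rfl⟩ := hbc
  exact ⟨d * e, M.mul_mem hd he, (mul_assoc a d e).symm⟩

theorem leftDvd_mul_left_iff (p : G) : M.LeftDvd (p * a) (p * b) ↔ M.LeftDvd a b := by
  simp only [LeftDvd, mul_assoc, mul_right_inj]

theorem leftDvd_iff_inv_mul_mem : M.LeftDvd a b ↔ a⁻¹ * b ∈ M :=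
  ⟨fun ⟨c, hc, hac⟩ => by rwa [← hac, inv_mul_cancel_left], fun h =>
    ⟨a⁻¹ * b, h, mul_inv_cancel_left a b⟩⟩

theorem LeftDvd.antisymm (hM : ∀ c ∈ M, ∀ d ∈ M, c * d = 1 → c = 1)
    (hab : M.LeftDvd a b) (hba : M.LeftDvd b a) : a = b := by
  obtain ⟨c, hc, rfl⟩ := hab
  obtain ⟨d, hd, hcd⟩ := hba
  rw [mul_assoc, mul_eq_left] at hcd
  rw [hM c hc d hd hcd, mul_one]

end Submonoid

open Submonoid

def IsLeftGCD (M : Submonoid G) (wedge : G → G → G) : Prop :=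
  ∀ a ∈ M, ∀ b ∈ M, wedge a b ∈ M ∧ M.LeftDvd (wedge a b) a ∧ M.LeftDvd (wedge a b) b ∧
    ∀ d ∈ M, M.LeftDvd d a → M.LeftDvd d b → M.LeftDvd d (wedge a b)

namespace IsLeftGCD

variable {M : Submonoid G} {wedge : G → G → G}

theorem eq_one_of_leftDvd (hw : IsLeftGCD M wedge) (hM : ∀ c ∈ M, ∀ d ∈ M, c * d = 1 → c = 1)
    {a b d : G} (ha : a ∈ M) (hb : b ∈ M) (hab : wedge a b = 1) (hd : d ∈ M)
    (hda : M.LeftDvd d a) (hdb : M.LeftDvd d b) : d = 1 := by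
  obtain ⟨c, hc, hdc⟩ := (hw a ha b hb).2.2.2 d hd hda hdb
  exact hM d hd c hc (hdc.trans hab)

theorem wedge_eq_right (hw : IsLeftGCD M wedge) (hM : ∀ c ∈ M, ∀ d ∈ M, c * d = 1 → c = 1)
    {a b : G} (ha : a ∈ M) (hb : b ∈ M) (hba : M.LeftDvd b a) : wedge a b = b :=
  have ⟨_, _, hwb, hgcd⟩ := hw a ha b hb
  hwb.antisymm hM (hgcd b hb hba (leftDvd_refl b))

theorem wedge_eq_one_of_leftDvd (hw : IsLeftGCD M wedge)
    (hM : ∀ c ∈ M, ∀ d ∈ M, c * d = 1 → c = 1) {s t b : G} (hs : s ∈ M) (ht : t ∈ M)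
    (hb : b ∈ M) (hst : M.LeftDvd s t) (h : wedge s (wedge t b) = 1) : wedge s b = 1 := by
  obtain ⟨hwM, hws, hwb, -⟩ := hw s hs b hb
  obtain ⟨htbM, -, -, hgcd_tb⟩ := hw t ht b hb
  exact hw.eq_one_of_leftDvd hM hs htbM h hwM hws (hgcd_tb _ hwM (hws.trans hst) hwb)

theorem wedge_mul_eq (hw : IsLeftGCD M wedge) (hM : ∀ c ∈ M, ∀ d ∈ M, c * d = 1 → c = 1)
    {δ p q : G} (hδ : δ ∈ M) (hp : p ∈ M) (hq : q ∈ M) (hpδ : M.LeftDvd p δ)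
    (hcop : wedge (p⁻¹ * δ) q = 1) : wedge δ (p * q) = p := by
  obtain ⟨-, hwδ, hwpq, hgcd⟩ := hw δ hδ (p * q) (M.mul_mem hp hq)
  obtain ⟨e, he, hpe⟩ := hgcd p hp hpδ (leftDvd_mul_right p hq)
  rw [← hpe] at hwδ hwpq ⊢
  rw [← mul_inv_cancel_left p δ, leftDvd_mul_left_iff] at hwδ
  rw [leftDvd_mul_left_iff] at hwpq
  rw [hw.eq_one_of_leftDvd hM (leftDvd_iff_inv_mul_mem.1 hpδ) hq hcop he hwδ hwpq, mul_one]

variable {simple : G → Prop} {δ : G}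

theorem wedge_prod_eq_head (hw : IsLeftGCD M wedge) (hM : ∀ c ∈ M, ∀ d ∈ M, c * d = 1 → c = 1)
    (hδ : δ ∈ M) (hpos : ∀ s, simple s → s ∈ M) (hcompl : ∀ s, simple s → simple (s⁻¹ * δ))
    {p : G} {P : List G} (hP : ∀ q ∈ p :: P, simple q)
    (hchain : (p :: P).IsChain (fun a b => wedge (a⁻¹ * δ) b = 1)) :
    wedge δ (p :: P).prod = p := by
  have hdvd : ∀ s, simple s → M.LeftDvd s δ := fun s hs =>
    leftDvd_iff_inv_mul_mem.2 (hpos _ (hcompl s hs))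
  induction P generalizing p with
  | nil =>
    have hp := hP p List.mem_cons_self
    rw [List.prod_singleton]
    exact hw.wedge_eq_right hM hδ (hpos p hp) (hdvd p hp)
  | cons p₂ P ih =>
    rw [List.forall_mem_cons] at hP
    rw [List.isChain_cons_cons] at hchain
    have hPM : (p₂ :: P).prod ∈ M := M.list_prod_mem fun q hq => hpos q (hP.2 q hq)
    have hcop : wedge (p⁻¹ * δ) (p₂ :: P).prod = 1 := by
      refine hw.wedge_eq_one_of_leftDvd hM (hpos _ (hcompl p hP.1)) hδ hPM
        (hdvd _ (hcompl p hP.1)) ?_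
      rw [ih hP.2 hchain.2]
      exact hchain.1
    exact hw.wedge_mul_eq hM hδ (hpos p hP.1) hPM (hdvd p hP.1) hcop

theorem exponent_nonneg_or_eq_one (hw : IsLeftGCD M wedge)
    (hM : ∀ c ∈ M, ∀ d ∈ M, c * d = 1 → c = 1) (hδ : δ ∈ M) (hpos : ∀ s, simple s → s ∈ M)
    (hcompl : ∀ s, simple s → simple (s⁻¹ * δ)) {x : G} {k : ℤ} {P : List G} (hx : x ∈ M)
    (hP : ∀ p ∈ P, simple p ∧ p ≠ δ) (hchain : P.IsChain (fun a b => wedge (a⁻¹ * δ) b = 1))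
    (hxP : x = δ ^ k * P.prod) : 0 ≤ k ∨ δ = 1 := by
  by_contra! ⟨hk, hδ1⟩
  obtain ⟨m, rfl⟩ : ∃ m : ℕ, k = -(m + 1 : ℕ) := ⟨k.natAbs - 1, by omega⟩
  have hδP : M.LeftDvd δ P.prod := ⟨δ ^ m * x, M.mul_mem (M.pow_mem hδ m) hx, by
    rw [hxP, zpow_neg, zpow_natCast, ← mul_assoc, ← pow_succ', mul_inv_cancel_left]⟩
  cases P with
  | nil =>
    obtain ⟨c, hc, hδc⟩ := hδP
    exact hδ1 (hM δ hδ c hc hδc)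
  | cons p P =>
    have hp := hP p List.mem_cons_self
    have hhead := hw.wedge_prod_eq_head hM hδ hpos hcompl (fun q hq => (hP q hq).1) hchain
    obtain ⟨-, -, -, hgcd⟩ := hw δ hδ _ (M.list_prod_mem fun q hq => hpos q (hP q hq).1)
    have hδp : M.LeftDvd δ p := hhead ▸ hgcd δ hδ (leftDvd_refl δ) hδP
    exact hp.2 ((leftDvd_iff_inv_mul_mem.2 (hpos _ (hcompl p hp.1))).antisymm hM hδp)

end IsLeftGCD

end GarsideLengths

theorem lengths_of_positive_elements_general {G : Type*} [Group G]
    (M : Submonoid G) (A : Set G) (δ : G) (simple : G → Prop)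
    (wedge : G → G → G) (ℓG ℓR : G → ℕ)
    -- M is generated by the atoms, and the relations are length preserving
    (hgen : Submonoid.closure A = M)
    (hadd : ∀ a ∈ M, ∀ b ∈ M, minLen A (a * b) = minLen A a + minLen A b)
    -- simple elements: positive, left-dividing δ, with simple complements
    (hsimple_pos : ∀ s : G, simple s → s ∈ M)
    (hδ_simple : simple δ)
    (hcompl : ∀ s : G, simple s → ∃ c : G, simple c ∧ s * c = δ)
    -- `wedge` is the left gcd on positive elements
    (hwedge : ∀ a ∈ M, ∀ b ∈ M, wedge a b ∈ M ∧
      (∃ c ∈ M, wedge a b * c = a) ∧ (∃ c ∈ M, wedge a b * c = b) ∧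
      ∀ d ∈ M, (∃ c ∈ M, d * c = a) → (∃ c ∈ M, d * c = b) →
        ∃ c ∈ M, d * c = wedge a b)
    -- greedy normal form `x = δ^k p₁⋯p_r` and the greedy length
    (hG : ∀ x : G, ∃ (k : ℤ) (P : List G),
      (∀ p ∈ P, simple p ∧ p ≠ δ ∧ p ≠ 1) ∧
      List.Chain' (fun a b => wedge (a⁻¹ * δ) b = 1) P ∧
      x = δ ^ k * P.prod ∧
      ℓG x = k.natAbs * minLen A δ + (P.map (minLen A)).sum)
    -- rational normal form `x = (s₁⋯s_k)⁻¹(p₁⋯p_l)` and the rational length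
    (hR : ∀ x : G, ∃ U V : List G,
      (∀ s ∈ U ++ V, simple s ∧ s ≠ 1) ∧
      List.Chain' (fun a b => wedge (a⁻¹ * δ) b = 1) U ∧
      List.Chain' (fun a b => wedge (a⁻¹ * δ) b = 1) V ∧
      wedge U.prod V.prod = 1 ∧
      x = U.prod⁻¹ * V.prod ∧
      ℓR x = ((U ++ V).map (minLen A)).sum) :
    ∀ x : G, (x ∈ M → ℓG x = minLen A x ∧ ℓR x = minLen A x) ∧
      (x⁻¹ ∈ M → ℓR x = minLen A x) := by
  have hw : IsLeftGCD M wedge := hwedge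
  have hM : ∀ c ∈ M, ∀ d ∈ M, c * d = 1 → c = 1 := fun c hc d hd =>
    eq_one_of_mul_eq_one hgen.ge hadd hc hd
  have hδ : δ ∈ M := hsimple_pos δ hδ_simple
  have hcompl_inv : ∀ s, simple s → simple (s⁻¹ * δ) := by
    intro s hs
    obtain ⟨c, hc, rfl⟩ := hcompl s hs
    simpa using hc
  intro x
  obtain ⟨U, V, hUV, -, -, hcop, hxUV, hℓR⟩ := hR x
  have hUM : ∀ s ∈ U, s ∈ M := fun s hs => hsimple_pos s (hUV s (List.mem_append_left V hs)).1
  have hVM : ∀ s ∈ V, s ∈ M := fun s hs => hsimple_pos s (hUV s (List.mem_append_right U hs)).1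
  rw [List.map_append, List.sum_append, ← minLen_list_prod hadd hUM,
    ← minLen_list_prod hadd hVM] at hℓR
  have hU := M.list_prod_mem hUM
  have hV := M.list_prod_mem hVM
  refine ⟨fun hx => ⟨?_, ?_⟩, fun hx => ?_⟩
  · obtain ⟨k, P, hP, hchain, hxP, hℓG⟩ := hG x
    have hPM : ∀ p ∈ P, p ∈ M := fun p hp => hsimple_pos p (hP p hp).1
    rw [hℓG, hxP, minLen_zpow_mul_prod hadd hδ hPM (hw.exponent_nonneg_or_eq_one hM hδ
      hsimple_pos hcompl_inv hx (fun p hp => ⟨(hP p hp).1, (hP p hp).2.1⟩) hchain hxP)]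
  · have hU1 : U.prod = 1 := hw.eq_one_of_leftDvd hM hU hV hcop hU (Submonoid.leftDvd_refl _)
      ⟨x, hx, by rw [hxUV, mul_inv_cancel_left]⟩
    rw [hℓR, hxUV, hU1, inv_one, one_mul, minLen_one, zero_add]
  · have hV1 : V.prod = 1 := hw.eq_one_of_leftDvd hM hU hV hcop hV
      ⟨x⁻¹, hx, by rw [hxUV, mul_inv_rev, inv_inv, mul_inv_cancel_left]⟩ (Submonoid.leftDvd_refl _)
    rw [hℓR, ← minLen_inv x, hxUV, hV1, mul_one, inv_inv, minLen_one, add_zero]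

/-- Let `G` be the group of fractions of a Garside monoid `M` with
length-preserving relations, atom set `A`, and fundamental element `δ`.  For every
`x ∈ G`: if `x` is positive (`x ∈ M`) then `ℓ_G(x) = ℓ_R(x) = ℓ(x)`, and if `x⁻¹ ∈ M`
then `ℓ_R(x) = ℓ(x)`, where `ℓ = minLen A` is the minimal length over the atoms and
their inverses. -/
theorem lengths_of_positive_elements {G : Type*} [Group G]
    (M : Submonoid G) (A : Set G) (δ : G) (simple : G → Prop)
    (wedge : G → G → G) (ℓG ℓR : G → ℕ)
    -- M is generated by the atoms, and the relations are length preserving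
    (hgen : Submonoid.closure A = M)
    (hadd : ∀ a ∈ M, ∀ b ∈ M, minLen A (a * b) = minLen A a + minLen A b)
    -- simple elements: positive, left-dividing δ, with simple complements
    (hatom_simple : ∀ a ∈ A, simple a)
    (hsimple_pos : ∀ s : G, simple s → s ∈ M)
    (hδ_simple : simple δ)
    (hcompl : ∀ s : G, simple s → ∃ c : G, simple c ∧ s * c = δ)
    (hcompl' : ∀ s : G, simple s → ∃ c : G, simple c ∧ c * s = δ)
    -- `wedge` is the left gcd on positive elements
    (hwedge : ∀ a ∈ M, ∀ b ∈ M, wedge a b ∈ M ∧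
      (∃ c ∈ M, wedge a b * c = a) ∧ (∃ c ∈ M, wedge a b * c = b) ∧
      ∀ d ∈ M, (∃ c ∈ M, d * c = a) → (∃ c ∈ M, d * c = b) →
        ∃ c ∈ M, d * c = wedge a b)
    -- greedy normal form `x = δ^k p₁⋯p_r` and the greedy length
    (hG : ∀ x : G, ∃ (k : ℤ) (P : List G),
      (∀ p ∈ P, simple p ∧ p ≠ δ ∧ p ≠ 1) ∧
      List.Chain' (fun a b => wedge (a⁻¹ * δ) b = 1) P ∧
      x = δ ^ k * P.prod ∧
      ℓG x = k.natAbs * minLen A δ + (P.map (minLen A)).sum)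
    -- rational normal form `x = (s₁⋯s_k)⁻¹(p₁⋯p_l)` and the rational length
    (hR : ∀ x : G, ∃ U V : List G,
      (∀ s ∈ U ++ V, simple s ∧ s ≠ 1) ∧
      List.Chain' (fun a b => wedge (a⁻¹ * δ) b = 1) U ∧
      List.Chain' (fun a b => wedge (a⁻¹ * δ) b = 1) V ∧
      wedge U.prod V.prod = 1 ∧
      x = U.prod⁻¹ * V.prod ∧
      ℓR x = ((U ++ V).map (minLen A)).sum) :
    ∀ x : G, (x ∈ M → ℓG x = minLen A x ∧ ℓR x = minLen A x) ∧
      (x⁻¹ ∈ M → ℓR x = minLen A x) :=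
  lengths_of_positive_elements_general M A δ simple wedge ℓG ℓR hgen hadd hsimple_pos hδ_simple
    hcompl hwedge hG hR
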